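/- arXiv:2504.15048 — 2 statements merged into one kernel-verified Lean document; each statement's English description precedes it below -/
import Mathlib

section
/- Let α : ℝ → ℝ be twice differentiable with α(t) > 0 for all t, and suppose α is bounded above. If there is a constant C ∈ ℝ such that α(t)·α''(t) = C for all t ∈ ℝ, then C = 0 and α is constant. -/
/-!
Since `α > 0`, the sign of `α''` is the sign of `C`. If `C ≥ 0` then `α` is convex, and a convex
function on `ℝ` that is bounded above is constant: a secant of positive (negative) slope forces it
above every bound to the right (left). If `C ≤ 0` then `α` is concave and bounded below by `0`,
which is the same situation for `-α`. A constant `α` has `α'' = 0`, hence `C = 0`.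
-/

open Set

theorem ConvexOn.antitone_of_bddAbove {f : ℝ → ℝ} (hf : ConvexOn ℝ univ f)
    (hb : BddAbove (range f)) : Antitone f := by
  intro x y hxy
  obtain ⟨M, hM⟩ := hb
  by_contra! hlt
  obtain rfl | hxy := hxy.eq_or_lt
  · exact lt_irrefl _ hlt
  set s := (f y - f x) / (y - x)
  have hs_pos : 0 < s := div_pos (sub_pos.2 hlt) (sub_pos.2 hxy)
  -- the secant line through `(y, f y)` of slope `s` exceeds `M` at `z`
  set z := y + (M - f y) / s + 1
  have hyz : y < z := by
    have : 0 ≤ (M - f y) / s := div_nonneg (sub_nonneg.2 (hM ⟨y, rfl⟩)) hs_pos.le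
    linarith
  have hslope : s ≤ (f z - f y) / (z - y) :=
    hf.slope_mono_adjacent (mem_univ x) (mem_univ z) hxy hyz
  have hgrowth : s * (z - y) ≤ f z - f y := (le_div_iff₀ (sub_pos.2 hyz)).1 hslope
  have hzy : s * (z - y) = M - f y + s := by
    simp only [z]; field_simp; ring
  linarith [hM ⟨z, rfl⟩]

theorem ConvexOn.apply_eq_of_bddAbove {f : ℝ → ℝ} (hf : ConvexOn ℝ univ f)
    (hb : BddAbove (range f)) (x y : ℝ) : f x = f y := by
  have hmono : Monotone f := by
    have hneg : ConvexOn ℝ univ (f ∘ Neg.neg) := by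
      simpa [Function.comp_def] using hf.comp_affineMap (-.id ..)
    have := hneg.antitone_of_bddAbove (by rwa [neg_surjective.range_comp])
    intro a b hab
    simpa using this (neg_le_neg hab)
  rcases le_total x y with h | h
  · exact le_antisymm (hmono h) (hf.antitone_of_bddAbove hb h)
  · exact le_antisymm (hf.antitone_of_bddAbove hb h) (hmono h)

theorem ConcaveOn.apply_eq_of_bddBelow {f : ℝ → ℝ} (hf : ConcaveOn ℝ univ f)
    (hb : BddBelow (range f)) (x y : ℝ) : f x = f y :=
  have ⟨m, hm⟩ := hb
  neg_inj.1 <| hf.neg.apply_eq_of_bddAbove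
    ⟨-m, forall_mem_range.2 fun t => neg_le_neg (hm ⟨t, rfl⟩)⟩ x y

theorem ode_rigidity_alpha_constant
    (α : ℝ → ℝ) (h1 : Differentiable ℝ α) (h2 : Differentiable ℝ (deriv α))
    (hpos : ∀ t, 0 < α t) (hbdd : ∃ M, ∀ t, α t ≤ M)
    (C : ℝ) (hode : ∀ t, α t * deriv (deriv α) t = C) :
    C = 0 ∧ ∀ s t, α s = α t := by
  have hconst : ∀ s t, α s = α t := by
    rcases le_total 0 C with hC | hC
    · have hconvex : ConvexOn ℝ univ α := convexOn_univ_of_deriv2_nonneg h1 h2 fun t =>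
        nonneg_of_mul_nonneg_right ((hode t).symm ▸ hC) (hpos t)
      obtain ⟨M, hM⟩ := hbdd
      exact hconvex.apply_eq_of_bddAbove ⟨M, forall_mem_range.2 hM⟩
    · have hconcave : ConcaveOn ℝ univ α := concaveOn_univ_of_deriv2_nonpos h1 h2 fun t =>
        nonpos_of_mul_nonpos_right ((hode t).symm ▸ hC) (hpos t)
      exact hconcave.apply_eq_of_bddBelow ⟨0, forall_mem_range.2 fun t => (hpos t).le⟩
  refine ⟨?_, hconst⟩
  have hα : α = fun _ => α 0 := funext fun t => hconst t 0
  have hα' : deriv α = fun _ => 0 := by rw [hα, deriv_const']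
  simpa [hα'] using (hode 0).symm
end

section
/- Let f : ℝ → ℝ be continuous. Suppose that for every s₀ ∈ ℝ there exist δ > 0 and a function ψ : ℝ → ℝ that is twice differentiable on (s₀ − δ, s₀ + δ), such that ψ(s₀) = f(s₀), ψ(x) ≥ f(x) for all x ∈ (s₀ − δ, s₀ + δ), and the second derivative satisfies ψ''(s₀) ≤ 0. Then f is concave on ℝ. -/
/-!
Fix a chord of `f` over `[x, y]` and `ε > 0`. The function `g = f - chord + ε (t - x) (y - t)`
vanishes at `x` and `y` and has no interior local minimum: at such a point `s₀` the upper support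
function of `f`, modified in the same way, would also have a local minimum, while its second
derivative at `s₀` is at most `-2ε < 0`. Hence `g ≥ 0` on `[x, y]`, and letting `ε → 0` puts `f`
above its chord.
-/

open Set Filter Topology

structure IsUpperSupportAt (f ψ : ℝ → ℝ) (s₀ : ℝ) : Prop where
  eq : ψ s₀ = f s₀
  le : f ≤ᶠ[𝓝 s₀] ψ
  eventually_differentiableAt : ∀ᶠ t in 𝓝 s₀, DifferentiableAt ℝ ψ t
  differentiableAt_deriv : DifferentiableAt ℝ (deriv ψ) s₀

theorem IsLocalMin.deriv_deriv_nonneg {f : ℝ → ℝ} {a : ℝ} (h : IsLocalMin f a)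
    (hc : ContinuousAt f a) : 0 ≤ deriv (deriv f) a := by
  by_contra! hneg
  have hpos : ∀ᶠ t in 𝓝[<] a, 0 < deriv f t := deriv_pos_left_of_sign_deriv <|
    nhdsWithin_le_nhds <| eventually_nhdsWithin_sign_eq_of_deriv_neg hneg h.deriv_eq_zero
  obtain ⟨l, hla, hsub⟩ :=
    mem_nhdsLT_iff_exists_Ioo_subset.1 (hpos.and (nhdsWithin_le_nhds h))
  obtain ⟨t, hlt, hta⟩ := exists_between (mem_Iio.1 hla)
  have hcont : ContinuousOn f (Icc t a) := by
    intro u hu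
    rcases hu.2.eq_or_lt with rfl | hua
    · exact hc.continuousWithinAt
    · exact (differentiableAt_of_deriv_ne_zero
        (hsub ⟨hlt.trans_le hu.1, hua⟩).1.ne').continuousAt.continuousWithinAt
  have hmono : StrictMonoOn f (Icc t a) := by
    refine strictMonoOn_of_deriv_pos (convex_Icc t a) hcont fun u hu => ?_
    rw [interior_Icc] at hu
    exact (hsub ⟨hlt.trans hu.1, hu.2⟩).1
  exact (hmono ⟨le_rfl, hta.le⟩ ⟨hta.le, le_rfl⟩ hta).not_ge (hsub ⟨hlt, hta⟩).2

section DerivAdd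

variable {𝕜 F : Type*} [NontriviallyNormedField 𝕜] [NormedAddCommGroup F] [NormedSpace 𝕜 F]
  {f g : 𝕜 → F} {x : 𝕜}

theorem deriv_add_eventuallyEq (hf : ∀ᶠ t in 𝓝 x, DifferentiableAt 𝕜 f t)
    (hg : ∀ᶠ t in 𝓝 x, DifferentiableAt 𝕜 g t) : deriv (f + g) =ᶠ[𝓝 x] deriv f + deriv g := by
  filter_upwards [hf, hg] with t hft hgt
  exact deriv_add hft hgt

theorem deriv_deriv_add (hf : ∀ᶠ t in 𝓝 x, DifferentiableAt 𝕜 f t)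
    (hg : ∀ᶠ t in 𝓝 x, DifferentiableAt 𝕜 g t) (hf' : DifferentiableAt 𝕜 (deriv f) x)
    (hg' : DifferentiableAt 𝕜 (deriv g) x) :
    deriv (deriv (f + g)) x = deriv (deriv f) x + deriv (deriv g) x := by
  rw [(deriv_add_eventuallyEq hf hg).deriv_eq, deriv_add hf' hg']

end DerivAdd

namespace IsUpperSupportAt

variable {f ψ : ℝ → ℝ} {s₀ : ℝ}

theorem of_Ioo {δ : ℝ} (hδ : 0 < δ) (hψ : DifferentiableOn ℝ ψ (Ioo (s₀ - δ) (s₀ + δ)))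
    (hψ' : DifferentiableOn ℝ (deriv ψ) (Ioo (s₀ - δ) (s₀ + δ))) (heq : ψ s₀ = f s₀)
    (hle : ∀ x ∈ Ioo (s₀ - δ) (s₀ + δ), f x ≤ ψ x) : IsUpperSupportAt f ψ s₀ := by
  have hU : Ioo (s₀ - δ) (s₀ + δ) ∈ 𝓝 s₀ := Ioo_mem_nhds (by linarith) (by linarith)
  exact ⟨heq, eventually_of_mem hU hle, hψ.eventually_differentiableAt hU,
    hψ'.differentiableAt hU⟩

theorem add (h : IsUpperSupportAt f ψ s₀) {q : ℝ → ℝ} (hq : ∀ᶠ t in 𝓝 s₀, DifferentiableAt ℝ q t)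
    (hq' : DifferentiableAt ℝ (deriv q) s₀) : IsUpperSupportAt (f + q) (ψ + q) s₀ where
  eq := by simp only [Pi.add_apply, h.eq]
  le := h.le.add_le_add (EventuallyLE.refl _ q)
  eventually_differentiableAt := by
    filter_upwards [h.eventually_differentiableAt, hq] with t hψt hqt
    exact hψt.add hqt
  differentiableAt_deriv := (h.differentiableAt_deriv.add hq').congr_of_eventuallyEq
    (deriv_add_eventuallyEq h.eventually_differentiableAt hq)

theorem continuousAt (h : IsUpperSupportAt f ψ s₀) : ContinuousAt ψ s₀ :=
  h.eventually_differentiableAt.self_of_nhds.continuousAt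

theorem not_isLocalMin (h : IsUpperSupportAt f ψ s₀) (hψ'' : deriv (deriv ψ) s₀ < 0) :
    ¬IsLocalMin f s₀ := fun hmin => by
  have hψmin : IsLocalMin ψ s₀ := by
    filter_upwards [hmin, h.le] with t hft hfψ
    rw [h.eq]
    exact hft.trans hfψ
  exact hψ''.not_ge (hψmin.deriv_deriv_nonneg h.continuousAt)

end IsUpperSupportAt

theorem ContinuousOn.min_le_of_forall_not_isLocalMin {g : ℝ → ℝ} {x y t : ℝ}
    (hg : ContinuousOn g (Icc x y)) (hmin : ∀ s ∈ Ioo x y, ¬IsLocalMin g s) (ht : t ∈ Icc x y) :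
    min (g x) (g y) ≤ g t := by
  obtain ⟨s, hs, hsmin⟩ := isCompact_Icc.exists_isMinOn ⟨t, ht⟩ hg
  have hs_end : s = x ∨ s = y := by
    by_contra! hne
    have hs' : s ∈ Ioo x y := ⟨hs.1.lt_of_ne hne.1.symm, hs.2.lt_of_ne hne.2⟩
    exact hmin s hs' (hsmin.isLocalMin (Icc_mem_nhds hs'.1 hs'.2))
  rcases hs_end with rfl | rfl
  · exact (min_le_left _ _).trans (hsmin ht)
  · exact (min_le_right _ _).trans (hsmin ht)

section Chord

variable {f : ℝ → ℝ} {x y t : ℝ}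

theorem chord_sub_le_of_isUpperSupportAt (hf : ContinuousOn f (Icc x y))
    (hsupp : ∀ s₀ ∈ Ioo x y, ∃ ψ, IsUpperSupportAt f ψ s₀ ∧ deriv (deriv ψ) s₀ ≤ 0)
    (ht : t ∈ Icc x y) {ε : ℝ} (hε : 0 < ε) :
    f x + slope f x y * (t - x) - ε * ((t - x) * (y - t)) ≤ f t := by
  set m := slope f x y
  set q : ℝ → ℝ := fun u => ε * ((u - x) * (y - u)) - m * u
  have hq : Differentiable ℝ q := by fun_prop
  have hq_deriv : deriv q = fun u => ε * (x + y - 2 * u) - m := by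
    ext u
    have := ((((hasDerivAt_id u).sub_const x).mul ((hasDerivAt_id u).const_sub y)).const_mul ε).sub
      ((hasDerivAt_id u).const_mul m)
    exact this.deriv.trans (by simp only [id]; ring)
  have hq'' (s : ℝ) : HasDerivAt (deriv q) (-2 * ε) s := by
    rw [hq_deriv]
    exact ((((hasDerivAt_id s).const_mul 2).const_sub (x + y)).const_mul ε).sub_const m
      |>.congr_deriv (by ring)
  have hno_min : ∀ s ∈ Ioo x y, ¬IsLocalMin (f + q) s := by
    intro s hs
    obtain ⟨ψ, hψ, hψ''⟩ := hsupp s hs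
    refine (hψ.add (.of_forall hq) (hq'' s).differentiableAt).not_isLocalMin ?_
    rw [deriv_deriv_add hψ.eventually_differentiableAt (.of_forall hq) hψ.differentiableAt_deriv
      (hq'' s).differentiableAt, (hq'' s).deriv]
    linarith
  have hmin := (hf.add hq.continuous.continuousOn).min_le_of_forall_not_isLocalMin hno_min ht
  have hends : (f + q) y = (f + q) x := by
    have hslope := sub_smul_slope f x y
    rw [smul_eq_mul, vsub_eq_sub] at hslope
    simp only [Pi.add_apply, q]
    linear_combination -hslope
  rw [hends, min_self] at hmin
  simp only [Pi.add_apply, q] at hmin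
  linarith

theorem chord_le_of_isUpperSupportAt (hf : ContinuousOn f (Icc x y))
    (hsupp : ∀ s₀ ∈ Ioo x y, ∃ ψ, IsUpperSupportAt f ψ s₀ ∧ deriv (deriv ψ) s₀ ≤ 0)
    (ht : t ∈ Icc x y) : f x + slope f x y * (t - x) ≤ f t := by
  have hlim : Tendsto (fun ε => f x + slope f x y * (t - x) - ε * ((t - x) * (y - t))) (𝓝[>] 0)
      (𝓝 (f x + slope f x y * (t - x))) :=
    tendsto_nhdsWithin_of_tendsto_nhds <| by
      have hcont : Continuous fun ε : ℝ => f x + slope f x y * (t - x) - ε * ((t - x) * (y - t)) :=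
        by fun_prop
      simpa using hcont.tendsto 0
  exact le_of_tendsto hlim <| eventually_nhdsWithin_of_forall fun ε hε =>
    chord_sub_le_of_isUpperSupportAt hf hsupp ht hε

end Chord

theorem concaveOn_of_isUpperSupportAt {s : Set ℝ} {f : ℝ → ℝ} (hs : Convex ℝ s)
    (hf : ContinuousOn f s)
    (hsupp : ∀ s₀ ∈ s, ∃ ψ, IsUpperSupportAt f ψ s₀ ∧ deriv (deriv ψ) s₀ ≤ 0) :
    ConcaveOn ℝ s f := by
  refine LinearOrder.concaveOn_of_lt hs fun x hx y hy hxy a b ha hb hab => ?_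
  have hIcc : Icc x y ⊆ s := hs.ordConnected.out hx hy
  have hmem : a • x + b • y ∈ Icc x y := segment_eq_Icc hxy.le ▸ ⟨a, b, ha.le, hb.le, hab, rfl⟩
  have hchord := chord_le_of_isUpperSupportAt (hf.mono hIcc)
    (fun s₀ hs₀ => hsupp s₀ (hIcc (Ioo_subset_Icc_self hs₀))) hmem
  have hvalue : a • f x + b • f y = f x + slope f x y * (a • x + b • y - x) := by
    rw [slope_def_field, smul_eq_mul, smul_eq_mul, smul_eq_mul, smul_eq_mul, eq_sub_of_add_eq hab]
    field_simp [sub_ne_zero.2 hxy.ne']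
    ring
  rwa [hvalue]

theorem concave_of_upper_support
    (f : ℝ → ℝ) (hf : Continuous f)
    (hsupp : ∀ s₀ : ℝ, ∃ δ > 0, ∃ ψ : ℝ → ℝ,
      DifferentiableOn ℝ ψ (Set.Ioo (s₀ - δ) (s₀ + δ)) ∧
      DifferentiableOn ℝ (deriv ψ) (Set.Ioo (s₀ - δ) (s₀ + δ)) ∧
      ψ s₀ = f s₀ ∧
      (∀ x ∈ Set.Ioo (s₀ - δ) (s₀ + δ), f x ≤ ψ x) ∧
      deriv (deriv ψ) s₀ ≤ 0) :
    ConcaveOn ℝ Set.univ f := by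
  refine concaveOn_of_isUpperSupportAt convex_univ hf.continuousOn fun s₀ _ => ?_
  obtain ⟨δ, hδ, ψ, hψ, hψ', heq, hle, hψ''⟩ := hsupp s₀
  exact ⟨ψ, .of_Ioo hδ hψ hψ' heq hle, hψ''⟩
end
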